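/- arXiv:2507.10289 — 3 statements merged into one kernel-verified Lean document; each statement's English description precedes it below -/
import Mathlib

section
/- For a Poincaré similarity A, the following are equivalent: A respects the binary relation S; A respects the binary relation Rest; A is a trivial Euclidean similarity. In particular, the Poincaré similarities respecting Rest are exactly the trivial Euclidean similarities. -/
namespace Spacetimes

open Finset

variable {F : Type*} [Field F] [LinearOrder F] [IsStrictOrderedRing F] {d : ℕ}

/-- The Euclidean scalar product on `Fin d → F`. -/
def euclProd (p q : Fin d → F) : F := ∑ i, p i * q i

/-- The Minkowski product on `Fin d → F`; index `0` is the time coordinate. -/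
def minkProd [NeZero d] (p q : Fin d → F) : F :=
  p 0 * q 0 - ∑ i ∈ Finset.univ.erase (0 : Fin d), p i * q i

/-- The squared distance function associated to a product `B`. -/
def sqDist (B : (Fin d → F) → (Fin d → F) → F) (p q : Fin d → F) : F :=
  B (p - q) (p - q)

/-- An affine transformation: a linear bijection composed with a translation. -/
def IsAffine (A : (Fin d → F) → (Fin d → F)) : Prop :=
  ∃ (L : (Fin d → F) ≃ₗ[F] (Fin d → F)) (t : Fin d → F), ∀ p, A p = L p + t

/-- A Euclidean similarity: an affine transformation scaling squared
Euclidean distances by a constant factor. -/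
def EuclSim (A : (Fin d → F) → (Fin d → F)) : Prop :=
  IsAffine A ∧ ∃ a : F, ∀ p q : Fin d → F,
    sqDist euclProd (A p) (A q) = a * sqDist euclProd p q

/-- A Poincaré similarity: an affine transformation scaling squared
Minkowski distances by a constant factor. -/
def PoiSim [NeZero d] (A : (Fin d → F) → (Fin d → F)) : Prop :=
  IsAffine A ∧ ∃ a : F, ∀ p q : Fin d → F,
    sqDist minkProd (A p) (A q) = a * sqDist minkProd p q

/-- A Galilean similarity. -/
def GalSim [NeZero d] (A : (Fin d → F) → (Fin d → F)) : Prop :=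
  IsAffine A ∧ ∃ a : F, ∀ p q : Fin d → F, p 0 = q 0 →
    A p 0 = A q 0 ∧ sqDist euclProd (A p) (A q) = a * sqDist euclProd p q

/-- A map respects a binary relation. -/
def Respects2 {α : Type*} (f : α → α) (R : α → α → Prop) : Prop :=
  ∀ p q, R p q ↔ R (f p) (f q)

/-- A map respects a ternary relation. -/
def Respects3 {α : Type*} (f : α → α) (R : α → α → α → Prop) : Prop :=
  ∀ p q r, R p q r ↔ R (f p) (f q) (f r)

/-- A map respects a 4-ary relation. -/
def Respects4 {α : Type*} (f : α → α) (R : α → α → α → α → Prop) : Prop :=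
  ∀ p q r s, R p q r s ↔ R (f p) (f q) (f r) (f s)

/-- Absolute simultaneity. -/
def SimRel [NeZero d] (p q : Fin d → F) : Prop := p 0 = q 0

/-- Being at rest (same spatial components). -/
def RestRel [NeZero d] (p q : Fin d → F) : Prop := ∀ i, i ≠ 0 → p i = q i

/-- A trivial Euclidean similarity: a Euclidean similarity respecting `RestRel`. -/
def TrivEuclSim [NeZero d] (A : (Fin d → F) → (Fin d → F)) : Prop :=
  EuclSim A ∧ Respects2 A RestRel

/-- A trivial Galilean similarity: a Galilean similarity respecting `RestRel`. -/
def TrivGalSim [NeZero d] (A : (Fin d → F) → (Fin d → F)) : Prop :=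
  GalSim A ∧ Respects2 A RestRel

/-- Betweenness. -/
def Bw (p q r : Fin d → F) : Prop :=
  ∃ l : F, 0 ≤ l ∧ l ≤ 1 ∧ q = p + l • (r - p)

/-- Lightlike relatedness. -/
def Light [NeZero d] (p q : Fin d → F) : Prop :=
  (p 0 - q 0) ^ 2 = ∑ i ∈ Finset.univ.erase (0 : Fin d), (p i - q i) ^ 2

/-- Euclidean congruence of segments. -/
def CongE (p q r s : Fin d → F) : Prop :=
  sqDist euclProd p q = sqDist euclProd r s

/-- Minkowski congruence of segments. -/
def CongM [NeZero d] (p q r s : Fin d → F) : Prop :=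
  sqDist minkProd p q = sqDist minkProd r s

/-- Congruence on simultaneity. -/
def CongS [NeZero d] (p q r s : Fin d → F) : Prop :=
  CongE p q r s ∧ SimRel p q ∧ SimRel r s

/-- The time axis. -/
def timeAxis (F : Type*) [Field F] [LinearOrder F] [IsStrictOrderedRing F] (d : ℕ) [NeZero d] :
    Set (Fin d → F) := {p | ∀ i, i ≠ 0 → p i = 0}

/-- The simultaneity at the origin. -/
def simul0 (F : Type*) [Field F] [LinearOrder F] [IsStrictOrderedRing F] (d : ℕ) [NeZero d] :
    Set (Fin d → F) := {p | p 0 = 0}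

/-- The `i`-th standard unit vector. -/
def unitVec (F : Type*) [Field F] [LinearOrder F] [IsStrictOrderedRing F] {d : ℕ} (i : Fin d) : Fin d → F :=
  Pi.single i 1

/-!
Write `A = L + t` with `L` linear. The time axis and the simultaneity of the origin are each
other's Minkowski-orthogonal complements, and `L` multiplies the Minkowski form by a nonzero
factor `a`, so `L` preserves one of them iff it preserves the other: this is `S ⟺ Rest`.
If `L` preserves the time axis, then `L e₀ = c e₀` with `c² = a`, whence `(L v)₀² = a v₀²`.
As the Euclidean and the Minkowski quadratic forms add up to `2 v₀²`, `L` then multiplies the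
Euclidean form by `a` as well; the same computation with the two forms exchanged gives the
converse.
-/

def orthogonalSet {V R : Type*} [Zero R] (B : V → V → R) (X : Set V) : Set V :=
  {v | ∀ w ∈ X, B v w = 0}

section Generic

variable {V R : Type*}

theorem map_mem_orthogonalSet_iff [MulZeroClass R] [NoZeroDivisors R] {B : V → V → R}
    {L : V → V} (hL : Function.Surjective L) {a : R} (ha : a ≠ 0)
    (hB : ∀ v w, B (L v) (L w) = a * B v w) {X : Set V} (hX : ∀ v, L v ∈ X ↔ v ∈ X) (v : V) :
    L v ∈ orthogonalSet B X ↔ v ∈ orthogonalSet B X := by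
  change (∀ w ∈ X, B (L v) w = 0) ↔ ∀ w ∈ X, B v w = 0
  rw [hL.forall]
  simp only [hX, hB, mul_eq_zero, ha, false_or]

theorem scale_ne_zero_of_surjective [MulZeroClass R] {B : V → V → R} {L : V → V}
    (hL : Function.Surjective L) {u : V} (hu : B u u ≠ 0) {a : R}
    (h : ∀ v, B (L v) (L v) = a * B v v) : a ≠ 0 := by
  rintro rfl
  obtain ⟨v, rfl⟩ := hL u
  exact hu (by rw [h, zero_mul])

theorem apply_map_map_of_apply_map_self [AddCommGroup V] [Field R] [CharZero R] {B : V → V → R}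
    (hpolar : ∀ u v, B (u + v) (u + v) = B u u + 2 * B u v + B v v)
    {G : Type*} [FunLike G V V] [AddMonoidHomClass G V V] {L : G} {a : R}
    (h : ∀ v, B (L v) (L v) = a * B v v) (v w : V) :
    B (L v) (L w) = a * B v w := by
  have hsum := h (v + w)
  rw [map_add, hpolar, hpolar] at hsum
  linear_combination hsum / 2 - h v / 2 - h w / 2

theorem respects2_iff_of_affine [AddCommGroup V] {Rel : V → V → Prop} {X : Set V}
    (hR : ∀ p q, Rel p q ↔ p - q ∈ X) {G : Type*} [FunLike G V V] [AddMonoidHomClass G V V]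
    {L : G} {t : V} {A : V → V} (hA : ∀ p, A p = L p + t) :
    Respects2 A Rel ↔ ∀ v, L v ∈ X ↔ v ∈ X := by
  have hsub : ∀ p q, A p - A q = L (p - q) := fun p q => by
    rw [hA, hA, map_sub]; abel
  refine ⟨fun h v => ?_, fun h p q => ?_⟩
  · simpa [hR, hsub] using (h v 0).symm
  · rw [hR, hR, hsub, h]

end Generic

section Forms

variable {K : Type*} [Field K] {n : ℕ}

theorem euclProd_self_add (u v : Fin n → K) :
    euclProd (u + v) (u + v) = euclProd u u + 2 * euclProd u v + euclProd v v := by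
  simp only [euclProd, Pi.add_apply, Finset.mul_sum, ← Finset.sum_add_distrib]
  exact Finset.sum_congr rfl fun i _ => by ring

theorem sqDist_scale_iff_of_affine {B : (Fin n → K) → (Fin n → K) → K}
    {G : Type*} [FunLike G (Fin n → K) (Fin n → K)] [AddMonoidHomClass G (Fin n → K) (Fin n → K)]
    {L : G} {t : Fin n → K} {A : (Fin n → K) → (Fin n → K)} (hA : ∀ p, A p = L p + t) (a : K) :
    (∀ p q, sqDist B (A p) (A q) = a * sqDist B p q) ↔ ∀ v, B (L v) (L v) = a * B v v := by
  have hsub : ∀ p q, A p - A q = L (p - q) := fun p q => by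
    rw [hA, hA, map_sub]; abel
  refine ⟨fun h v => ?_, fun h p q => ?_⟩
  · simpa [sqDist, hsub] using h v 0
  · rw [sqDist, sqDist, hsub, h]

variable [NeZero n]

theorem euclProd_add_minkProd (v w : Fin n → K) :
    euclProd v w + minkProd v w = 2 * (v 0 * w 0) := by
  rw [euclProd, minkProd, ← Finset.add_sum_erase _ _ (Finset.mem_univ 0)]
  ring

theorem minkProd_self_add (u v : Fin n → K) :
    minkProd (u + v) (u + v) = minkProd u u + 2 * minkProd u v + minkProd v v := by
  linear_combination (norm := (simp only [Pi.add_apply]; ring))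
    euclProd_add_minkProd (u + v) (u + v) - euclProd_self_add u v
    - euclProd_add_minkProd u u - 2 * euclProd_add_minkProd u v - euclProd_add_minkProd v v

theorem minkProd_comm (v w : Fin n → K) : minkProd v w = minkProd w v := by
  simp only [minkProd, mul_comm]

end Forms

section Spacetime

variable [NeZero d]

theorem minkProd_of_mem_timeAxis (v : Fin d → F) {w : Fin d → F} (hw : w ∈ timeAxis F d) :
    minkProd v w = v 0 * w 0 := by
  rw [minkProd, Finset.sum_eq_zero fun i hi => by rw [hw i (Finset.ne_of_mem_erase hi), mul_zero],
    sub_zero]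

theorem euclProd_of_mem_timeAxis (v : Fin d → F) {w : Fin d → F} (hw : w ∈ timeAxis F d) :
    euclProd v w = v 0 * w 0 := by
  linear_combination euclProd_add_minkProd v w - minkProd_of_mem_timeAxis v hw

theorem minkProd_unitVec (v : Fin d → F) {i : Fin d} (hi : i ≠ 0) :
    minkProd v (unitVec F i) = -v i := by
  rw [minkProd, unitVec, Pi.single_eq_of_ne (Ne.symm hi), mul_zero, zero_sub,
    Finset.sum_eq_single_of_mem i (Finset.mem_erase.mpr ⟨hi, Finset.mem_univ i⟩)
      fun j _ hj => by rw [Pi.single_eq_of_ne hj, mul_zero],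
    Pi.single_eq_same, mul_one]

theorem unitVec_zero_mem_timeAxis : unitVec F (0 : Fin d) ∈ timeAxis F d :=
  fun _ hi => Pi.single_eq_of_ne hi 1

theorem unitVec_zero_apply_zero : unitVec F (0 : Fin d) 0 = 1 := Pi.single_eq_same 0 1

theorem timeAxis_eq_orthogonalSet :
    timeAxis F d = orthogonalSet minkProd (simul0 F d) := by
  ext v
  refine ⟨fun hv w hw => ?_, fun hv i hi => ?_⟩
  · rw [minkProd_comm, minkProd_of_mem_timeAxis w hv, show w 0 = 0 from hw, zero_mul]
  · have h := hv (unitVec F i) (Pi.single_eq_of_ne (Ne.symm hi) 1)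
    rwa [minkProd_unitVec v hi, neg_eq_zero] at h

theorem simul0_eq_orthogonalSet :
    simul0 F d = orthogonalSet minkProd (timeAxis F d) := by
  ext v
  refine ⟨fun hv w hw => ?_, fun hv => ?_⟩
  · rw [minkProd_of_mem_timeAxis v hw, show v 0 = 0 from hv, zero_mul]
  · have h := hv _ unitVec_zero_mem_timeAxis
    rwa [minkProd_of_mem_timeAxis v unitVec_zero_mem_timeAxis, unitVec_zero_apply_zero,
      mul_one] at h

theorem simRel_iff_sub_mem_simul0 (p q : Fin d → F) : SimRel p q ↔ p - q ∈ simul0 F d := by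
  simp [SimRel, simul0, sub_eq_zero]

theorem restRel_iff_sub_mem_timeAxis (p q : Fin d → F) :
    RestRel p q ↔ p - q ∈ timeAxis F d := by
  simp [RestRel, timeAxis, sub_eq_zero]

theorem sq_map_apply_zero {B : (Fin d → F) → (Fin d → F) → F}
    (hT : ∀ v w, w ∈ timeAxis F d → B v w = v 0 * w 0) {L : (Fin d → F) → (Fin d → F)} {a : F}
    (ha : a ≠ 0) (hB : ∀ v w, B (L v) (L w) = a * B v w)
    (hL : L (unitVec F 0) ∈ timeAxis F d) (v : Fin d → F) :
    L v 0 ^ 2 = a * v 0 ^ 2 := by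
  set c := L (unitVec F 0) 0
  have hv : L v 0 * c = a * v 0 := by
    simpa [hT _ _ hL, hT _ _ unitVec_zero_mem_timeAxis, unitVec_zero_apply_zero]
      using hB v (unitVec F 0)
  have hc : c * c = a := by
    simpa [hT _ _ hL, hT _ _ unitVec_zero_mem_timeAxis, unitVec_zero_apply_zero]
      using hB (unitVec F 0) (unitVec F 0)
  apply mul_left_cancel₀ ha
  linear_combination (L v 0 * c + a * v 0) * hv - L v 0 ^ 2 * hc

theorem sqDist_scale_of_respects_restRel {B B' : (Fin d → F) → (Fin d → F) → F}
    (hsum : ∀ v, B v v + B' v v = 2 * (v 0 * v 0))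
    (hpolar : ∀ u v, B (u + v) (u + v) = B u u + 2 * B u v + B v v)
    (hT : ∀ v w, w ∈ timeAxis F d → B v w = v 0 * w 0) {A : (Fin d → F) → (Fin d → F)}
    (hA : IsAffine A) (hR : Respects2 A RestRel) {a : F}
    (h : ∀ p q, sqDist B (A p) (A q) = a * sqDist B p q) :
    ∀ p q, sqDist B' (A p) (A q) = a * sqDist B' p q := by
  obtain ⟨L, t, hAL⟩ := hA
  rw [sqDist_scale_iff_of_affine hAL] at h ⊢
  have ha : a ≠ 0 := scale_ne_zero_of_surjective L.surjective
    (u := unitVec F 0) (by simp [hT _ _ unitVec_zero_mem_timeAxis, unitVec_zero_apply_zero]) h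
  have hL : L (unitVec F 0) ∈ timeAxis F d :=
    ((respects2_iff_of_affine restRel_iff_sub_mem_timeAxis hAL).mp hR _).mpr
      unitVec_zero_mem_timeAxis
  have htime := sq_map_apply_zero hT ha (apply_map_map_of_apply_map_self hpolar h) hL
  intro v
  linear_combination hsum (L v) - a * hsum v - h v + 2 * htime v

theorem euclSim_of_poiSim {A : (Fin d → F) → (Fin d → F)} (hA : PoiSim A)
    (hR : Respects2 A RestRel) : EuclSim A :=
  ⟨hA.1, hA.2.imp fun _ =>
    sqDist_scale_of_respects_restRel (fun v => by linear_combination euclProd_add_minkProd v v)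
      minkProd_self_add (fun v _ => minkProd_of_mem_timeAxis v) hA.1 hR⟩

theorem poiSim_of_euclSim {A : (Fin d → F) → (Fin d → F)} (hA : EuclSim A)
    (hR : Respects2 A RestRel) : PoiSim A :=
  ⟨hA.1, hA.2.imp fun _ =>
    sqDist_scale_of_respects_restRel (fun v => euclProd_add_minkProd v v)
      euclProd_self_add (fun v _ => euclProd_of_mem_timeAxis v) hA.1 hR⟩

theorem respects2_simRel_iff_restRel {A : (Fin d → F) → (Fin d → F)} (hA : PoiSim A) :
    Respects2 A SimRel ↔ Respects2 A RestRel := by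
  obtain ⟨⟨L, t, hAL⟩, a, h⟩ := hA
  rw [sqDist_scale_iff_of_affine hAL] at h
  have ha : a ≠ 0 := scale_ne_zero_of_surjective L.surjective (u := unitVec F 0)
    (by simp [minkProd_of_mem_timeAxis _ unitVec_zero_mem_timeAxis, unitVec_zero_apply_zero]) h
  have hB := apply_map_map_of_apply_map_self minkProd_self_add h
  rw [respects2_iff_of_affine simRel_iff_sub_mem_simul0 hAL,
    respects2_iff_of_affine restRel_iff_sub_mem_timeAxis hAL]
  constructor
  · intro hS
    rw [timeAxis_eq_orthogonalSet]
    exact map_mem_orthogonalSet_iff L.surjective ha hB hS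
  · intro hT
    rw [simul0_eq_orthogonalSet]
    exact map_mem_orthogonalSet_iff L.surjective ha hB hT

end Spacetime

theorem poiSim_respects_iff_trivEuclSim_general [NeZero d] :
    (∀ A : (Fin d → F) → (Fin d → F), PoiSim A →
      ((Respects2 A SimRel ↔ Respects2 A RestRel) ∧
       (Respects2 A RestRel ↔ TrivEuclSim A))) ∧
    {A : (Fin d → F) → (Fin d → F) | PoiSim A ∧ Respects2 A RestRel}
      = {A | TrivEuclSim A} := by
  refine ⟨fun A hA => ⟨respects2_simRel_iff_restRel hA,
    fun hR => ⟨euclSim_of_poiSim hA hR, hR⟩, And.right⟩, ?_⟩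
  ext A
  exact ⟨fun ⟨hA, hR⟩ => ⟨euclSim_of_poiSim hA hR, hR⟩,
    fun ⟨hA, hR⟩ => ⟨poiSim_of_euclSim hA hR, hR⟩⟩

/-- for a Poincaré similarity, respecting `S`, respecting `Rest`
and being a trivial Euclidean similarity are equivalent; in particular the
Poincaré similarities respecting `Rest` are exactly the trivial Euclidean
similarities. -/
theorem poiSim_respects_iff_trivEuclSim [NeZero d] (hd : 2 ≤ d) :
    (∀ A : (Fin d → F) → (Fin d → F), PoiSim A →
      ((Respects2 A SimRel ↔ Respects2 A RestRel) ∧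
       (Respects2 A RestRel ↔ TrivEuclSim A))) ∧
    {A : (Fin d → F) → (Fin d → F) | PoiSim A ∧ Respects2 A RestRel}
      = {A | TrivEuclSim A} :=
  poiSim_respects_iff_trivEuclSim_general

end Spacetimes
end

section
/- For an affine transformation A : F^d → F^d the following are equivalent: (i) A respects both lightlike relatedness λ and betweenness Bw; (ii) A respects both Minkowski congruence ≡_μ and betweenness Bw; (iii) A is a Poincaré similarity. (That is, the affine automorphisms of Relativistic spacetime ⟨F^d, λ, Bw⟩ and of Minkowski spacetime ⟨F^d, ≡_μ, Bw⟩ coincide and are exactly the Poincaré similarities.) -/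
namespace Spacetimes

variable {F : Type*} [Field F]

section Minkowski

variable {d : ℕ} [NeZero d]

variable (F d) in
def minkBilin : LinearMap.BilinForm F (Fin d → F) :=
  (LinearMap.mul F F).compl₁₂ (LinearMap.proj 0) (LinearMap.proj 0) -
    ∑ i ∈ Finset.univ.erase (0 : Fin d),
      (LinearMap.mul F F).compl₁₂ (LinearMap.proj i) (LinearMap.proj i)

@[simp] lemma minkBilin_apply (p q : Fin d → F) : minkBilin F d p q = minkProd p q := by
  simp [minkBilin, minkProd]

lemma minkBilin_isSymm : (minkBilin F d).IsSymm :=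
  ⟨fun p q => by simp [minkProd, mul_comm]⟩

@[simp] lemma minkProd_single_zero_self :
    minkProd (Pi.single (0 : Fin d) (1 : F)) (Pi.single 0 1) = 1 := by
  rw [minkProd, Finset.sum_eq_zero fun k hk => by simp [Finset.ne_of_mem_erase hk]]
  simp

lemma minkProd_single_self_of_ne_zero {i : Fin d} (hi : i ≠ 0) :
    minkProd (Pi.single i (1 : F)) (Pi.single i 1) = -1 := by
  rw [minkProd, Finset.sum_eq_single_of_mem i (by simp [hi]) fun k _ hk => by simp [hk]]
  simp [hi.symm]

lemma minkProd_single_of_ne {i j : Fin d} (hij : i ≠ j) :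
    minkProd (Pi.single i (1 : F)) (Pi.single j 1) = 0 := by
  have h : ∀ k, (Pi.single i 1 : Fin d → F) k * (Pi.single j 1 : Fin d → F) k = 0 := fun k => by
    rcases eq_or_ne k i with rfl | hki <;> simp [*]
  simp [minkProd, h]

variable (d) in
def VanishesOnLightCone (G : LinearMap.BilinForm F (Fin d → F)) : Prop :=
  ∀ v, minkBilin F d v v = 0 → G v v = 0

namespace VanishesOnLightCone

variable [CharZero F] {G : LinearMap.BilinForm F (Fin d → F)}

lemma apply_single_of_ne_zero (hG : G.IsSymm) (h : VanishesOnLightCone d G) {i : Fin d} (hi : i ≠ 0) :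
    G (Pi.single 0 1) (Pi.single i 1) = 0 ∧
      G (Pi.single i 1) (Pi.single i 1) = -G (Pi.single 0 1) (Pi.single 0 1) := by
  have hp := h (Pi.single 0 1 + Pi.single i 1) (by
    simp only [map_add, LinearMap.add_apply]
    simp [minkProd_single_self_of_ne_zero hi, minkProd_single_of_ne hi,
      minkProd_single_of_ne hi.symm])
  have hm := h (Pi.single 0 1 - Pi.single i 1) (by
    simp only [map_sub, LinearMap.sub_apply]
    simp [minkProd_single_self_of_ne_zero hi, minkProd_single_of_ne hi,
      minkProd_single_of_ne hi.symm])
  simp only [map_add, map_sub, LinearMap.add_apply, LinearMap.sub_apply,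
    hG.eq (Pi.single i 1) (Pi.single 0 1)] at hp hm
  exact ⟨by linear_combination (hp - hm) / 4, by linear_combination (hp + hm) / 2⟩

lemma apply_single_of_ne (hG : G.IsSymm) (h : VanishesOnLightCone d G) {i j : Fin d} (hi : i ≠ 0)
    (hj : j ≠ 0) (hij : i ≠ j) : G (Pi.single i 1) (Pi.single j 1) = 0 := by
  have h534 := h ((5 : F) • Pi.single 0 1 + (3 : F) • Pi.single i 1 + (4 : F) • Pi.single j 1) (by
    simp only [map_add, map_smul, LinearMap.add_apply, LinearMap.smul_apply, smul_eq_mul]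
    simp [minkProd_single_self_of_ne_zero hi, minkProd_single_self_of_ne_zero hj,
      minkProd_single_of_ne hi, minkProd_single_of_ne hi.symm, minkProd_single_of_ne hj,
      minkProd_single_of_ne hj.symm, minkProd_single_of_ne hij, minkProd_single_of_ne hij.symm]
    norm_num)
  obtain ⟨h0i, hii⟩ := h.apply_single_of_ne_zero hG hi
  obtain ⟨h0j, hjj⟩ := h.apply_single_of_ne_zero hG hj
  simp only [map_add, map_smul, LinearMap.add_apply, LinearMap.smul_apply, smul_eq_mul,
    hG.eq (Pi.single i 1) (Pi.single 0 1), hG.eq (Pi.single j 1) (Pi.single 0 1),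
    hG.eq (Pi.single j 1) (Pi.single i 1), h0i, hii, h0j, hjj] at h534
  linear_combination h534 / 24

theorem eq_smul_minkBilin (hG : G.IsSymm) (h : VanishesOnLightCone d G) :
    G = G (Pi.single 0 1) (Pi.single 0 1) • minkBilin F d := by
  refine LinearMap.BilinForm.ext_basis (Pi.basisFun F (Fin d)) fun i j => ?_
  simp only [Pi.basisFun_apply, LinearMap.smul_apply, minkBilin_apply, smul_eq_mul]
  rcases eq_or_ne i j with rfl | hij
  · rcases eq_or_ne i 0 with rfl | hi
    · simp
    · rw [(h.apply_single_of_ne_zero hG hi).2, minkProd_single_self_of_ne_zero hi]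
      ring
  rw [minkProd_single_of_ne hij, mul_zero]
  rcases eq_or_ne i 0 with rfl | hi
  · exact (h.apply_single_of_ne_zero hG hij.symm).1
  rcases eq_or_ne j 0 with rfl | hj
  · rw [hG.eq]
    exact (h.apply_single_of_ne_zero hG hi).1
  exact h.apply_single_of_ne hG hi hj hij

end VanishesOnLightCone

theorem exists_minkProd_map_eq_mul [CharZero F] (L : (Fin d → F) →ₗ[F] (Fin d → F))
    (hL : ∀ v, minkProd v v = 0 → minkProd (L v) (L v) = 0) :
    ∃ a, ∀ v, minkProd (L v) (L v) = a * minkProd v v := by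
  set G : LinearMap.BilinForm F (Fin d → F) := (minkBilin F d).compl₁₂ L L
  have hG : G.IsSymm := ⟨fun p q => minkBilin_isSymm.eq (L p) (L q)⟩
  have h : VanishesOnLightCone d G := fun v hv => by simpa [G] using hL v (by simpa using hv)
  refine ⟨G (Pi.single 0 1) (Pi.single 0 1), fun v => ?_⟩
  simpa [G] using congrArg (fun B => B v v) (h.eq_smul_minkBilin hG)

lemma light_iff_sqDist_eq_zero (p q : Fin d → F) : Light p q ↔ sqDist minkProd p q = 0 := by
  simp [Light, sqDist, minkProd, sub_eq_zero, sq]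

lemma light_iff_congM (p q : Fin d → F) : Light p q ↔ CongM p q q q := by
  simp [light_iff_sqDist_eq_zero, CongM, sqDist, minkProd]

lemma respects2_light_of_respects4_congM {A : (Fin d → F) → (Fin d → F)}
    (h : Respects4 A CongM) : Respects2 A Light :=
  fun p q => by simp only [light_iff_congM, h p q q q]

end Minkowski

section Affine

variable {d : ℕ} {A : (Fin d → F) → (Fin d → F)}

lemma IsAffine.exists_linearEquiv_sub (hA : IsAffine A) :
    ∃ L : (Fin d → F) ≃ₗ[F] (Fin d → F), ∀ p q, A p - A q = L (p - q) := by
  obtain ⟨L, t, hAt⟩ := hA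
  exact ⟨L, fun p q => by rw [hAt, hAt, map_sub]; abel⟩

lemma IsAffine.poiSim_of_light [NeZero d] [CharZero F] (hA : IsAffine A)
    (h : ∀ p q, Light p q → Light (A p) (A q)) : PoiSim A := by
  obtain ⟨L, hL⟩ := hA.exists_linearEquiv_sub
  obtain ⟨a, ha⟩ := exists_minkProd_map_eq_mul L.toLinearMap fun v hv => by
    simpa [light_iff_sqDist_eq_zero, sqDist, hL] using
      h v 0 (by simpa [light_iff_sqDist_eq_zero, sqDist] using hv)
  exact ⟨hA, a, fun p q => by simp only [sqDist, hL]; exact ha _⟩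

lemma PoiSim.respects4_congM [NeZero d] (hA : PoiSim A) : Respects4 A CongM := by
  obtain ⟨hA, a, ha⟩ := hA
  obtain ⟨L, hL⟩ := hA.exists_linearEquiv_sub
  have ha0 : a ≠ 0 := by
    rintro rfl
    simpa [sqDist, hL] using ha (L.symm (Pi.single 0 1)) 0
  intro p q r s
  simp only [CongM, ha, mul_right_inj' ha0]

lemma bw_iff_wbtw [LinearOrder F] (p q r : Fin d → F) : Bw p q r ↔ Wbtw F p q r := by
  simp [Bw, Wbtw, affineSegment, AffineMap.lineMap_apply, eq_comm, add_comm, and_assoc]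

lemma IsAffine.respects3_bw [LinearOrder F] [IsStrictOrderedRing F] (hA : IsAffine A) :
    Respects3 A Bw := by
  obtain ⟨L, hL⟩ := hA.exists_linearEquiv_sub
  let f : (Fin d → F) →ᵃ[F] (Fin d → F) :=
    { toFun := A, linear := L, map_vadd' := fun p v => by
        rw [vadd_eq_add, vadd_eq_add, ← sub_eq_iff_eq_add, hL, add_sub_cancel_right]; rfl }
  have hf : Function.Injective f := fun p q hpq =>
    sub_eq_zero.1 (L.map_eq_zero_iff.1 (by rw [← hL]; exact sub_eq_zero.2 hpq))
  intro p q r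
  simp only [bw_iff_wbtw]
  exact hf.wbtw_map_iff.symm

end Affine

variable [LinearOrder F] [IsStrictOrderedRing F] {d : ℕ}

theorem affAut_rel_eq_affAut_mink_eq_poiSim_general [NeZero d]
    (A : (Fin d → F) → (Fin d → F)) (hA : IsAffine A) :
    List.TFAE [Respects2 A Light ∧ Respects3 A Bw,
               Respects4 A CongM ∧ Respects3 A Bw,
               PoiSim A] := by
  tfae_have 1 → 3 := fun ⟨hlight, _⟩ => hA.poiSim_of_light fun p q => (hlight p q).1
  tfae_have 3 → 2 := fun h => ⟨h.respects4_congM, hA.respects3_bw⟩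
  tfae_have 2 → 1 := fun ⟨hcong, hbw⟩ => ⟨respects2_light_of_respects4_congM hcong, hbw⟩
  tfae_finish

/-- the affine automorphisms of Relativistic spacetime
`⟨F^d, λ, Bw⟩` and of Minkowski spacetime `⟨F^d, ≡_μ, Bw⟩` coincide, and
they are exactly the Poincaré similarities. -/
theorem affAut_rel_eq_affAut_mink_eq_poiSim [NeZero d] (hd : 2 ≤ d)
    (A : (Fin d → F) → (Fin d → F)) (hA : IsAffine A) :
    List.TFAE [Respects2 A Light ∧ Respects3 A Bw,
               Respects4 A CongM ∧ Respects3 A Bw,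
               PoiSim A] :=
  affAut_rel_eq_affAut_mink_eq_poiSim_general A hA

end Spacetimes
end

section
/- An affine transformation A : F^d → F^d respects all three of congruence on simultaneity ≡_S, the relation Rest, and betweenness Bw if and only if A is a trivial Galilean similarity. (That is, the affine automorphisms of Newtonian spacetime ⟨F^d, ≡_S, Rest, Bw⟩ are exactly the trivial Galilean similarities.) -/
/-!
Write `A = L + t`. The congruence `(p, q) ≡_S (p, q)` holds exactly when `p` and `q` are
simultaneous, so an `A` respecting `≡_S` respects simultaneity, and `L` maps Euclidean-congruent
vectors of the hyperplane `v₀ = 0` to congruent ones. Polarization on the standard basis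
`e₁, …, e_{d-1}` of that hyperplane shows that the `L eᵢ` are pairwise orthogonal with a common
squared length `a`, so `L` scales squared lengths there by `a`.

Conversely, the linear part of a Galilean similarity maps the hyperplane into, hence (being a
bijection in finite dimension) onto, itself, so simultaneity is also reflected; and the factor `a`
can be cancelled, because for `a = 0` definiteness and injectivity of `L` make the hyperplane
trivial. Every affine bijection respects betweenness, and `Rest` occurs on both sides.
-/

namespace Spacetimes

open Finset

variable {F : Type*} [Field F] [LinearOrder F] [IsStrictOrderedRing F] {d : ℕ}

theorem _root_.sub_eq_map_sub_of_eq_add {G H 𝓕 : Type*} [AddCommGroup G] [AddCommGroup H]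
    [FunLike 𝓕 G H] [AddMonoidHomClass 𝓕 G H] {A : G → H} {L : 𝓕} {t : H}
    (hA : ∀ p, A p = L p + t) (p q : G) : A p - A q = L (p - q) := by
  rw [hA, hA, map_sub]
  abel

theorem _root_.LinearEquiv.map_mem_iff_of_mapsTo {K V : Type*} [Field K] [AddCommGroup V]
    [Module K V] [FiniteDimensional K V] (L : V ≃ₗ[K] V) {W : Submodule K V}
    (h : ∀ v ∈ W, L v ∈ W) (v : V) : L v ∈ W ↔ v ∈ W := by
  have hmap : W.map (L : V →ₗ[K] V) = W :=
    Submodule.eq_of_le_of_finrank_eq (Submodule.map_le_iff_le_comap.2 h) (L.finrank_map_eq W)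
  refine ⟨fun hv => ?_, h v⟩
  rw [← hmap, Submodule.mem_map_equiv] at hv
  simpa using hv

section DotProduct

variable {ι R : Type*} [Fintype ι] [CommRing R]

theorem _root_.dotProduct_self_add_sub_dotProduct_self_sub (x y : ι → R) :
    (x + y) ⬝ᵥ (x + y) - (x - y) ⬝ᵥ (x - y) = 4 * (x ⬝ᵥ y) := by
  simp only [add_dotProduct, dotProduct_add, sub_dotProduct, dotProduct_sub, dotProduct_comm y x]
  ring

theorem _root_.add_dotProduct_self_eq_sub_dotProduct_self_iff [NoZeroDivisors R] [CharZero R]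
    {x y : ι → R} : (x + y) ⬝ᵥ (x + y) = (x - y) ⬝ᵥ (x - y) ↔ x ⬝ᵥ y = 0 := by
  rw [← sub_eq_zero, dotProduct_self_add_sub_dotProduct_self_sub, mul_eq_zero]
  simp

theorem _root_.map_dotProduct_self_eq_mul_of_orthogonal [DecidableEq ι]
    (L : (ι → R) →ₗ[R] (ι → R)) {s : Finset ι} {a : R}
    (horth : ∀ i ∈ s, ∀ j ∈ s,
      L (Pi.single i 1) ⬝ᵥ L (Pi.single j 1) = if i = j then a else 0)
    {v : ι → R} (hv : ∀ i ∉ s, v i = 0) :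
    L v ⬝ᵥ L v = a * (v ⬝ᵥ v) := by
  have hsum : ∑ i ∈ s, v i • Pi.single i 1 = v :=
    (Finset.sum_subset (Finset.subset_univ s) fun i _ hi => by simp [hv i hi]).trans
      (pi_eq_sum_univ' v).symm
  have hLv : L v = ∑ i ∈ s, v i • L (Pi.single i 1) := by
    conv_lhs => rw [← hsum]
    simp only [map_sum, map_smul]
  have hvv : v ⬝ᵥ v = ∑ i ∈ s, v i * v i :=
    (Finset.sum_subset (Finset.subset_univ s) fun i _ hi => by simp [hv i hi]).symm
  calc L v ⬝ᵥ L v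
      = ∑ i ∈ s, v i * ∑ j ∈ s, v j * (L (Pi.single i 1) ⬝ᵥ L (Pi.single j 1)) := by
        conv_lhs => rw [hLv, sum_dotProduct]
        simp only [smul_dotProduct, dotProduct_sum, dotProduct_smul, smul_eq_mul, Finset.mul_sum]
        exact Finset.sum_congr rfl fun i _ => Finset.sum_congr rfl fun j _ => mul_left_comm _ _ _
    _ = ∑ i ∈ s, v i * (v i * a) := by
        refine Finset.sum_congr rfl fun i hi => ?_
        simp only [Finset.sum_congr rfl fun j hj => congrArg (v j * ·) (horth i hi j hj),
          mul_ite, mul_zero, Finset.sum_ite_eq, if_pos hi]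
    _ = a * (v ⬝ᵥ v) := by
        rw [hvv, Finset.mul_sum]
        exact Finset.sum_congr rfl fun i _ => by ring

theorem _root_.map_dotProduct_self_eq_iff [LinearOrder R] [IsStrictOrderedRing R]
    {L : (ι → R) →ₗ[R] (ι → R)} (hL : Function.Injective L)
    {W : Set (ι → R)} {a : R} (ha : ∀ v ∈ W, L v ⬝ᵥ L v = a * (v ⬝ᵥ v))
    {u v : ι → R} (hu : u ∈ W) (hv : v ∈ W) :
    L u ⬝ᵥ L u = L v ⬝ᵥ L v ↔ u ⬝ᵥ u = v ⬝ᵥ v := by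
  rcases eq_or_ne a 0 with rfl | ha0
  · have hzero : ∀ w ∈ W, w = 0 := fun w hw =>
      hL <| (dotProduct_self_eq_zero.1 (by simpa using ha w hw)).trans (map_zero L).symm
    simp [hzero u hu, hzero v hv]
  · rw [ha u hu, ha v hv, mul_right_inj' ha0]

end DotProduct

theorem exists_map_dotProduct_self_eq_mul {R : Type*} [CommRing R] [NoZeroDivisors R]
    [CharZero R] {n : ℕ} [NeZero n] (L : (Fin n → R) →ₗ[R] (Fin n → R))
    (hL : ∀ u v : Fin n → R, u 0 = 0 → v 0 = 0 → u ⬝ᵥ u = v ⬝ᵥ v → L u ⬝ᵥ L u = L v ⬝ᵥ L v) :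
    ∃ a : R, ∀ v : Fin n → R, v 0 = 0 → L v ⬝ᵥ L v = a * (v ⬝ᵥ v) := by
  set s := Finset.univ.erase (0 : Fin n)
  set e : Fin n → Fin n → R := fun i => Pi.single i 1
  have he : ∀ i ∈ s, e i 0 = 0 := fun i hi =>
    Pi.single_eq_of_ne (Finset.ne_of_mem_erase hi).symm 1
  have hee : ∀ i j, e i ⬝ᵥ e j = if i = j then 1 else 0 := by
    simp [e, Pi.single_apply, eq_comm]
  obtain ⟨a, hdiag⟩ : ∃ a, ∀ i ∈ s, L (e i) ⬝ᵥ L (e i) = a := by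
    rcases s.eq_empty_or_nonempty with hs | ⟨k, hk⟩
    · exact ⟨0, by simp [hs]⟩
    · exact ⟨_, fun i hi => hL _ _ (he i hi) (he k hk) (by simp [hee])⟩
  have horth : ∀ i ∈ s, ∀ j ∈ s, i ≠ j → L (e i) ⬝ᵥ L (e j) = 0 := by
    intro i hi j hj hij
    have hsum := hL (e i + e j) (e i - e j) (by simp [he i hi, he j hj])
      (by simp [he i hi, he j hj])
      (add_dotProduct_self_eq_sub_dotProduct_self_iff.2 (by simp [hee, hij]))
    rwa [map_add, map_sub, add_dotProduct_self_eq_sub_dotProduct_self_iff] at hsum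
  refine ⟨a, fun v hv => map_dotProduct_self_eq_mul_of_orthogonal L (s := s)
    (fun i hi j hj => ?_) fun i hi => ?_⟩
  · split_ifs with hij
    · exact hij ▸ hdiag i hi
    · exact horth i hi j hj hij
  · obtain rfl : i = 0 := by simpa [s] using hi
    exact hv

theorem sqDist_euclProd {K : Type*} [Field K] {n : ℕ} (p q : Fin n → K) :
    sqDist euclProd p q = (p - q) ⬝ᵥ (p - q) :=
  rfl

theorem simRel_iff_sub_apply_zero {G : Type*} [AddGroup G] {n : ℕ} [NeZero n]
    {p q : Fin n → G} : SimRel p q ↔ (p - q) 0 = 0 :=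
  sub_eq_zero.symm

theorem IsAffine.respects3_bw_s16 {K : Type*} [Field K] [LinearOrder K] {n : ℕ}
    {A : (Fin n → K) → (Fin n → K)} (hA : IsAffine A) : Respects3 A Bw := by
  obtain ⟨L, t, hL⟩ := hA
  have hinj : Function.Injective A := fun x y hxy =>
    L.injective (add_right_cancel (by rwa [← hL, ← hL]))
  have hsegment : ∀ (l : K) (p r : Fin n → K), A (p + l • (r - p)) = A p + l • (A r - A p) := by
    intro l p r
    simp only [hL, map_add, map_smul, map_sub]
    module
  intro p q r
  constructor
  · rintro ⟨l, h0, h1, rfl⟩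
    exact ⟨l, h0, h1, hsegment l p r⟩
  · rintro ⟨l, h0, h1, hq⟩
    exact ⟨l, h0, h1, hinj (by rw [hq, hsegment])⟩

theorem Respects4.respects2_simRel {K : Type*} [Field K] {n : ℕ} [NeZero n]
    {A : (Fin n → K) → (Fin n → K)} (hA : Respects4 A CongS) : Respects2 A SimRel := fun p q =>
  ⟨fun h => ((hA p q p q).1 ⟨rfl, h, h⟩).2.1, fun h => ((hA p q p q).2 ⟨rfl, h, h⟩).2.1⟩

theorem IsAffine.galSim_of_respects4_congS {K : Type*} [Field K] [CharZero K] {n : ℕ}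
    [NeZero n] {A : (Fin n → K) → (Fin n → K)} (hA : IsAffine A) (hC : Respects4 A CongS) :
    GalSim A := by
  obtain ⟨L, t, hL⟩ := hA
  have hsub := sub_eq_map_sub_of_eq_add hL
  obtain ⟨a, ha⟩ := exists_map_dotProduct_self_eq_mul L.toLinearMap fun u v hu hv huv => by
    have hcong := ((hC u 0 v 0).1 ⟨by simpa [CongE, sqDist_euclProd] using huv, hu, hv⟩).1
    simpa [CongE, sqDist_euclProd, hsub] using hcong
  refine ⟨⟨L, t, hL⟩, a, fun p q hpq => ⟨(hC.respects2_simRel p q).1 hpq, ?_⟩⟩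
  rw [sqDist_euclProd, sqDist_euclProd, hsub]
  exact ha _ (simRel_iff_sub_apply_zero.1 hpq)

theorem GalSim.respects4_congS [NeZero d] {A : (Fin d → F) → (Fin d → F)} (hA : GalSim A) :
    Respects4 A CongS := by
  obtain ⟨⟨L, t, hL⟩, a, hG⟩ := hA
  have hsub := sub_eq_map_sub_of_eq_add hL
  set W := LinearMap.ker (LinearMap.proj (R := F) (φ := fun _ : Fin d => F) 0)
  have hmem : ∀ v, v ∈ W ↔ v 0 = 0 := fun v => by simp [W]
  have hW : ∀ v, L v ∈ W ↔ v ∈ W := L.map_mem_iff_of_mapsTo fun v hv => by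
    rw [hmem, ← sub_zero v, ← hsub, Pi.sub_apply, sub_eq_zero]
    exact (hG v 0 ((hmem v).1 hv)).1
  have hsim : ∀ p q, SimRel (A p) (A q) ↔ SimRel p q := fun p q => by
    rw [simRel_iff_sub_apply_zero, simRel_iff_sub_apply_zero, hsub, ← hmem, ← hmem, hW]
  have hscale : ∀ v ∈ W, L v ⬝ᵥ L v = a * (v ⬝ᵥ v) := fun v hv => by
    simpa [sqDist_euclProd, hsub] using (hG v 0 ((hmem v).1 hv)).2
  intro p q r s
  simp only [CongS, hsim]
  refine and_congr_left fun ⟨hpq, hrs⟩ => ?_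
  simp only [CongE, sqDist_euclProd, hsub]
  exact (map_dotProduct_self_eq_iff (L := L.toLinearMap) L.injective hscale
    ((hmem _).2 (simRel_iff_sub_apply_zero.1 hpq))
    ((hmem _).2 (simRel_iff_sub_apply_zero.1 hrs))).symm

theorem affAut_newt_eq_trivGalSim_general [NeZero d]
    (A : (Fin d → F) → (Fin d → F)) (hA : IsAffine A) :
    (Respects4 A CongS ∧ Respects2 A RestRel ∧ Respects3 A Bw) ↔
      TrivGalSim A :=
  ⟨fun ⟨hC, hR, _⟩ => ⟨hA.galSim_of_respects4_congS hC, hR⟩,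
    fun ⟨hG, hR⟩ => ⟨hG.respects4_congS, hR, hA.respects3_bw_s16⟩⟩

/-- the affine automorphisms of Newtonian spacetime
`⟨F^d, ≡_S, Rest, Bw⟩` are exactly the trivial Galilean similarities. -/
theorem affAut_newt_eq_trivGalSim [NeZero d] (hd : 2 ≤ d)
    (A : (Fin d → F) → (Fin d → F)) (hA : IsAffine A) :
    (Respects4 A CongS ∧ Respects2 A RestRel ∧ Respects3 A Bw) ↔
      TrivGalSim A :=
  affAut_newt_eq_trivGalSim_general A hA

end Spacetimes
end
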